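/- arXiv:2104.06667 — 5 statements merged into one kernel-verified Lean document; each statement's English description precedes it below -/
import Mathlib

section
/- Suppose R ⟂ Y | X (ignorability), with π(X) = P(R=1|X) > 0 almost surely and m(X) = E[Y|X]. Then for any measurable function μ, E[μ(X) + (R/π(X))·(Y − μ(X))] = E[Y], i.e., the doubly robust representation identifies θ₀ = E[Y] whenever the propensity score is correctly specified, regardless of μ. -/
/-!
Write `π = E[R | X]`. Conditional independence makes the conditional law of `(R, Y)` given `X` a
product a.e., so `E[R Y | X] = π E[Y | X]`. As `μ(X)` and `1/π` are `σ(X)`-measurable they pull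
out of `E[· | X]`, whence `E[R (Y - μ(X)) / π | X] = E[Y | X] - μ(X)`; taking expectations, the
augmentation term has mean `E[Y] - E[μ(X)]`.
-/

open MeasureTheory ProbabilityTheory Set

namespace MeasureTheory

variable {Ω : Type*} {m mΩ : MeasurableSpace Ω} {μ : Measure Ω}

lemma integral_mul_eq_integral_mul_condExp (hm : m ≤ mΩ) [SigmaFinite (μ.trim hm)]
    {h f : Ω → ℝ} (hh : AEStronglyMeasurable[m] h μ) (hhf : Integrable (h * f) μ)
    (hf : Integrable f μ) :
    ∫ ω, h ω * f ω ∂μ = ∫ ω, h ω * (μ[f | m]) ω ∂μ := by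
  rw [← integral_condExp hm]
  exact integral_congr_ae (condExp_mul_of_aestronglyMeasurable_left hh hhf hf)

lemma integrable_of_integrable_div {f π : Ω → ℝ}
    (hπ : AEStronglyMeasurable π μ) (hπ_pos : ∀ᵐ ω ∂μ, 0 < π ω) (hπ_le : ∀ᵐ ω ∂μ, π ω ≤ 1)
    (hfπ : Integrable (fun ω => f ω / π ω) μ) : Integrable f μ := by
  refine (hfπ.bdd_mul hπ (c := 1) ?_).congr ?_
  · filter_upwards [hπ_pos, hπ_le] with ω h0 h1
    rw [Real.norm_eq_abs, abs_of_pos h0]; exact h1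
  · filter_upwards [hπ_pos] with ω h0
    field_simp

end MeasureTheory

namespace ProbabilityTheory

lemma indepFun_of_measure_inter_preimage_Iic_rat {Ω : Type*} [MeasurableSpace Ω]
    {ν : Measure Ω} [IsZeroOrProbabilityMeasure ν] {f g : Ω → ℝ} (hf : Measurable f)
    (hg : Measurable g)
    (h : ∀ q r : ℚ, ν (f ⁻¹' Iic (q : ℝ) ∩ g ⁻¹' Iic (r : ℝ))
      = ν (f ⁻¹' Iic (q : ℝ)) * ν (g ⁻¹' Iic (r : ℝ))) :
    IndepFun f g ν := by
  have comap_eq : ∀ k : Ω → ℝ, MeasurableSpace.comap k inferInstance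
      = MeasurableSpace.generateFrom
        {s | ∃ t ∈ ⋃ a : ℚ, {Iic (a : ℝ)}, k ⁻¹' t = s} := fun k => by
    rw [BorelSpace.measurable_eq (α := ℝ), Real.borel_eq_generateFrom_Iic_rat,
      MeasurableSpace.comap_generateFrom, Set.image]
  refine IndepSets.indep hf.comap_le hg.comap_le (Real.isPiSystem_Iic_rat.comap f)
    (Real.isPiSystem_Iic_rat.comap g) (comap_eq f) (comap_eq g) ?_
  rw [IndepSets_iff]
  rintro _ _ ⟨_, hs, rfl⟩ ⟨_, ht, rfl⟩
  simp only [mem_iUnion, mem_singleton_iff] at hs ht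
  obtain ⟨q, rfl⟩ := hs
  obtain ⟨r, rfl⟩ := ht
  exact h q r

section CondIndepFun

variable {Ω : Type*} {m mΩ : MeasurableSpace Ω} [StandardBorelSpace Ω] {μ : Measure Ω}
  [IsFiniteMeasure μ] {hm : m ≤ mΩ} {f g : Ω → ℝ}

-- Countably many rational thresholds suffice, so the a.e. sets can be intersected.

lemma CondIndepFun.ae_indepFun_condExpKernel (hfg : CondIndepFun m hm f g μ)
    (hf : Measurable f) (hg : Measurable g) :
    ∀ᵐ ω ∂μ, IndepFun f g (condExpKernel μ m ω) := by
  have h_rat : ∀ q r : ℚ, ∀ᵐ ω ∂μ, condExpKernel μ m ω (f ⁻¹' Iic (q : ℝ) ∩ g ⁻¹' Iic (r : ℝ))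
      = condExpKernel μ m ω (f ⁻¹' Iic (q : ℝ)) * condExpKernel μ m ω (g ⁻¹' Iic (r : ℝ)) :=
    fun q r => ae_of_ae_trim hm <| hfg _ _ ⟨_, measurableSet_Iic, rfl⟩ ⟨_, measurableSet_Iic, rfl⟩
  filter_upwards [ae_all_iff.2 fun q => ae_all_iff.2 (h_rat q)] with ω hω
  exact indepFun_of_measure_inter_preimage_Iic_rat hf hg hω

lemma CondIndepFun.condExp_mul_ae_eq (hfg : CondIndepFun m hm f g μ)
    (hf : Measurable f) (hg : Measurable g) (hf_int : Integrable f μ) (hg_int : Integrable g μ)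
    (hfg_int : Integrable (f * g) μ) :
    μ[f * g | m] =ᵐ[μ] μ[f | m] * μ[g | m] := by
  filter_upwards [condExp_ae_eq_integral_condExpKernel hm hfg_int,
    condExp_ae_eq_integral_condExpKernel hm hf_int, condExp_ae_eq_integral_condExpKernel hm hg_int,
    hfg.ae_indepFun_condExpKernel hf hg] with ω hfg_ω hf_ω hg_ω h_indep
  rw [hfg_ω, Pi.mul_apply, hf_ω, hg_ω]
  exact h_indep.integral_mul_eq_mul_integral hf.aestronglyMeasurable hg.aestronglyMeasurable

end CondIndepFun

theorem integral_add_div_condExp_mul_sub {Ω : Type*} {m mΩ : MeasurableSpace Ω}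
    {μ : Measure Ω} [IsFiniteMeasure μ] (hm : m ≤ mΩ) {R Y g : Ω → ℝ}
    (hR : AEStronglyMeasurable R μ) (hR01 : ∀ᵐ ω ∂μ, R ω ∈ Icc 0 1)
    (hY : Integrable Y μ) (hRY : μ[R * Y | m] =ᵐ[μ] μ[R | m] * μ[Y | m])
    (hπ_pos : ∀ᵐ ω ∂μ, 0 < (μ[R | m]) ω) (hg : StronglyMeasurable[m] g)
    (hgπ : Integrable (fun ω => g ω / (μ[R | m]) ω) μ)
    (hYπ : Integrable (fun ω => Y ω / (μ[R | m]) ω) μ) :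
    ∫ ω, (g ω + (R ω / (μ[R | m]) ω) * (Y ω - g ω)) ∂μ = ∫ ω, Y ω ∂μ := by
  set π := μ[R | m]
  have hR_bound : ∀ᵐ ω ∂μ, ‖R ω‖ ≤ 1 := by
    filter_upwards [hR01] with ω ⟨h0, h1⟩
    rwa [Real.norm_eq_abs, abs_of_nonneg h0]
  have hR_int : Integrable R μ := .of_bound hR 1 hR_bound
  have hπ_le : ∀ᵐ ω ∂μ, π ω ≤ 1 := by
    filter_upwards [condExp_mono hR_int (integrable_const 1) (hR01.mono fun _ h => h.2)]
      with ω hω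
    rwa [condExp_const hm] at hω
  have hπ_meas : StronglyMeasurable[m] π := stronglyMeasurable_condExp
  have hg_int : Integrable g μ :=
    integrable_of_integrable_div (hπ_meas.mono hm).aestronglyMeasurable hπ_pos hπ_le hgπ
  have hRYg_int : Integrable (R * (Y - g)) μ := (hY.sub hg_int).bdd_mul hR hR_bound
  have hRYgπ_int : Integrable (π⁻¹ * (R * (Y - g))) μ := by
    refine ((hYπ.sub hgπ).bdd_mul hR hR_bound).congr ?_
    refine .of_forall fun ω => ?_
    simp only [Pi.mul_apply, Pi.sub_apply, Pi.inv_apply]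
    ring
  have h_condExp : μ[R * (Y - g) | m] =ᵐ[μ] π * (μ[Y | m] - g) := by
    have hRY_int : Integrable (R * Y) μ := hY.bdd_mul hR hR_bound
    have hRg_int : Integrable (R * g) μ := hg_int.bdd_mul hR hR_bound
    rw [mul_sub]
    filter_upwards [condExp_sub hRY_int hRg_int m, hRY,
      condExp_mul_of_stronglyMeasurable_right hg hRg_int hR_int] with ω h_sub h_RY h_Rg
    rw [h_sub, Pi.sub_apply, h_RY, h_Rg]
    simp only [Pi.mul_apply, Pi.sub_apply]
    ring
  calc ∫ ω, (g ω + (R ω / π ω) * (Y ω - g ω)) ∂μ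
      = ∫ ω, g ω ∂μ + ∫ ω, (π⁻¹ * (R * (Y - g))) ω ∂μ := by
        refine (integral_congr_ae (.of_forall fun ω => ?_)).trans (integral_add hg_int hRYgπ_int)
        simp only [Pi.mul_apply, Pi.sub_apply, Pi.inv_apply]
        ring
    _ = ∫ ω, g ω ∂μ + ∫ ω, (π⁻¹ * μ[R * (Y - g) | m]) ω ∂μ := by
        congr 1
        exact integral_mul_eq_integral_mul_condExp hm
          hπ_meas.measurable.inv.aestronglyMeasurable hRYgπ_int hRYg_int
    _ = ∫ ω, g ω ∂μ + ∫ ω, ((μ[Y | m]) ω - g ω) ∂μ := by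
        congr 1
        refine integral_congr_ae ?_
        filter_upwards [h_condExp, hπ_pos] with ω hω h0
        rw [Pi.mul_apply, hω, Pi.mul_apply, Pi.sub_apply, Pi.inv_apply]
        field_simp
    _ = ∫ ω, Y ω ∂μ := by
        rw [integral_sub integrable_condExp hg_int, integral_condExp hm]
        ring

end ProbabilityTheory

theorem dr_identification_correct_ps_general {Ω : Type*} [mΩ : MeasurableSpace Ω]
    [StandardBorelSpace Ω] (μ : Measure Ω) [IsProbabilityMeasure μ] {p : ℕ}
    (X : Ω → Fin p → ℝ) (R : Ω → ℝ) (hR : Measurable R)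
    (hRbin : ∀ ω, R ω = 0 ∨ R ω = 1) (Y : Ω → ℝ) (hY : Measurable Y)
    (hYint : Integrable Y μ)
    (mX : MeasurableSpace Ω) (hmXdef : mX = MeasurableSpace.comap X inferInstance)
    (hmX : mX ≤ mΩ)
    (hCI : CondIndepFun mX hmX R Y μ)
    (hπpos : ∀ᵐ ω ∂μ, 0 < (μ[R | mX]) ω)
    (μf : (Fin p → ℝ) → ℝ) (hμf : Measurable μf)
    (hint1 : Integrable (fun ω => μf (X ω) / (μ[R | mX]) ω) μ)
    (hint2 : Integrable (fun ω => Y ω / (μ[R | mX]) ω) μ) :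
    ∫ ω, (μf (X ω) + (R ω / (μ[R | mX]) ω) * (Y ω - μf (X ω))) ∂μ = ∫ ω, Y ω ∂μ := by
  have hR01 : ∀ ω, R ω ∈ Icc 0 1 := fun ω => by rcases hRbin ω with h | h <;> simp [h]
  have hR_bound : ∀ᵐ ω ∂μ, ‖R ω‖ ≤ 1 :=
    .of_forall fun ω => by rcases hRbin ω with h | h <;> simp [h]
  have hRY : μ[R * Y | mX] =ᵐ[μ] μ[R | mX] * μ[Y | mX] :=
    hCI.condExp_mul_ae_eq hR hY (.of_bound hR.aestronglyMeasurable 1 hR_bound) hYint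
      (hYint.bdd_mul hR.aestronglyMeasurable hR_bound)
  have hμfX : StronglyMeasurable[mX] fun ω => μf (X ω) := by
    subst hmXdef
    exact (hμf.comp (comap_measurable X)).stronglyMeasurable
  exact integral_add_div_condExp_mul_sub hmX hR.aestronglyMeasurable (.of_forall hR01) hYint hRY
    hπpos hμfX hint1 hint2

/-- Doubly robust identification with a correctly specified propensity score:
if `R ⟂ Y | X` (ignorability), `π(X) := E[R | σ(X)] > 0` a.s. and `μf` is any measurable
outcome working model, then `E[μf(X) + (R/π(X))·(Y − μf(X))] = E[Y]`. -/
theorem dr_identification_correct_ps {Ω : Type*} [mΩ : MeasurableSpace Ω]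
    [StandardBorelSpace Ω] (μ : Measure Ω) [IsProbabilityMeasure μ] {p : ℕ}
    (X : Ω → Fin p → ℝ) (hX : Measurable X) (R : Ω → ℝ) (hR : Measurable R)
    (hRbin : ∀ ω, R ω = 0 ∨ R ω = 1) (Y : Ω → ℝ) (hY : Measurable Y)
    (hYint : Integrable Y μ)
    (mX : MeasurableSpace Ω) (hmXdef : mX = MeasurableSpace.comap X inferInstance)
    (hmX : mX ≤ mΩ)
    (hCI : CondIndepFun mX hmX R Y μ)
    (hπpos : ∀ᵐ ω ∂μ, 0 < (μ[R | mX]) ω)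
    (μf : (Fin p → ℝ) → ℝ) (hμf : Measurable μf)
    (hint1 : Integrable (fun ω => μf (X ω) / (μ[R | mX]) ω) μ)
    (hint2 : Integrable (fun ω => Y ω / (μ[R | mX]) ω) μ) :
    ∫ ω, (μf (X ω) + (R ω / (μ[R | mX]) ω) * (Y ω - μf (X ω))) ∂μ = ∫ ω, Y ω ∂μ :=
  dr_identification_correct_ps_general (mΩ := mΩ) μ X R hR hRbin Y hY hYint mX hmXdef hmX hCI hπpos
    μf hμf hint1 hint2
end

section
/- Under the diverging-intercept logistic model π(X) = g(β₁ + X^T β₋₁) with π = E[π(X)], if the moment generating function of X exists at ±β₋₁, then (1/π)·(1−π)/MGF_X(−β₋₁) ≤ exp(−β₁) ≤ (1/π)·MGF_X(β₋₁). -/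
/-!
Write `u = β₁ + Xᵀβ₋₁`, so that `π = E[g(u)]` and `g` is the sigmoid. The upper bound is
`π ≤ E[eᵘ]`, from `g ≤ exp`. For the lower bound, `1 - g(u) = g(u) e⁻ᵘ` with `g` increasing
and `e⁻ᵘ` decreasing in `u`, so Chebyshev's covariance inequality gives
`1 - π = E[g(u) e⁻ᵘ] ≤ E[g(u)] · E[e⁻ᵘ] = π e^{-β₁} MGF_X(−β₋₁)`.
-/

open MeasureTheory

/-- The logistic function `g(u) = exp(u)/(1+exp(u))`. -/
noncomputable def logistic (u : ℝ) : ℝ := Real.exp u / (1 + Real.exp u)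

open Real

/- Chebyshev's integral inequality: integrate the rearrangement inequality
`f x g x + f y g y ≤ f x g y + f y g x` over `μ ⊗ μ`. -/
theorem Antivary.integral_mul_le_integral_mul_integral {Ω : Type*} [MeasurableSpace Ω]
    {μ : Measure Ω} [IsProbabilityMeasure μ] {f g : Ω → ℝ} (hfg : Antivary f g)
    (hf : Integrable f μ) (hg : Integrable g μ) (hfg_int : Integrable (fun ω => f ω * g ω) μ) :
    ∫ ω, f ω * g ω ∂μ ≤ (∫ ω, f ω ∂μ) * ∫ ω, g ω ∂μ := by
  have h := integral_mono ((hfg_int.comp_fst μ).add (hfg_int.comp_snd μ))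
    ((hf.mul_prod hg).add (hg.mul_prod hf)) fun z => by
      simpa [mul_comm (g z.1)] using hfg.mul_add_mul_le_mul_add_mul z.1 z.2
  simp only [Pi.add_apply] at h
  rw [integral_add (hfg_int.comp_fst μ) (hfg_int.comp_snd μ),
    integral_add (hf.mul_prod hg) (hg.mul_prod hf), integral_fun_fst (fun ω => f ω * g ω),
    integral_fun_snd (fun ω => f ω * g ω), integral_prod_mul f g, integral_prod_mul g f] at h
  simp only [probReal_univ, one_smul] at h
  linarith

lemma logistic_eq_sigmoid : logistic = sigmoid := by
  funext u
  rw [logistic, sigmoid_def, exp_neg]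
  field_simp
  ring

lemma Real.sigmoid_le_exp (x : ℝ) : sigmoid x ≤ exp x := by
  rw [sigmoid_def, ← inv_inv (exp x), ← exp_neg]
  exact inv_anti₀ (exp_pos _) (le_add_of_nonneg_left zero_le_one)

section SigmoidExpectation

variable {Ω : Type*} [MeasurableSpace Ω] {μ : Measure Ω} {u : Ω → ℝ}

lemma integrable_sigmoid_comp [IsFiniteMeasure μ] (hu : AEMeasurable u μ) :
    Integrable (fun ω => sigmoid (u ω)) μ :=
  .of_bound (continuous_sigmoid.comp_aestronglyMeasurable hu.aestronglyMeasurable) 1 <|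
    .of_forall fun ω => by
      rw [norm_of_nonneg (sigmoid_nonneg _)]
      exact sigmoid_le_one _

lemma integral_sigmoid_le_integral_exp (hu : Integrable (fun ω => exp (u ω)) μ) :
    ∫ ω, sigmoid (u ω) ∂μ ≤ ∫ ω, exp (u ω) ∂μ :=
  integral_mono_of_nonneg (.of_forall fun _ => sigmoid_nonneg _) hu
    (.of_forall fun ω => sigmoid_le_exp (u ω))

lemma one_sub_integral_sigmoid_le [IsProbabilityMeasure μ] (hu : AEMeasurable u μ)
    (hexp : Integrable (fun ω => exp (-u ω)) μ) :
    1 - ∫ ω, sigmoid (u ω) ∂μ ≤ (∫ ω, sigmoid (u ω) ∂μ) * ∫ ω, exp (-u ω) ∂μ := by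
  have hσ := integrable_sigmoid_comp hu
  have hprod : (fun ω => sigmoid (u ω) * exp (-u ω)) = fun ω => 1 - sigmoid (u ω) := by
    funext ω
    rw [sigmoid_mul_rexp_neg, sigmoid_neg]
  have hanti : Antivary (fun ω => sigmoid (u ω)) (fun ω => exp (-u ω)) :=
    (sigmoid_monotone.antivary fun _ _ h => exp_le_exp.2 (neg_le_neg h)).comp_right u
  calc 1 - ∫ ω, sigmoid (u ω) ∂μ = ∫ ω, sigmoid (u ω) * exp (-u ω) ∂μ := by
        rw [hprod, integral_sub (integrable_const 1) hσ, integral_const, probReal_univ, one_smul]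
    _ ≤ _ := hanti.integral_mul_le_integral_mul_integral hσ hexp (hprod ▸ (integrable_const 1).sub hσ)

end SigmoidExpectation

/-- Under the diverging-intercept logistic model `π(X) = g(β₁ + Xᵀβ₋₁)` with
`π = E[π(X)] ∈ (0,1)`, if the MGF of `X` exists at `±β₋₁`, then
`(1/π)·(1−π)/MGF_X(−β₋₁) ≤ exp(−β₁) ≤ (1/π)·MGF_X(β₋₁)`. -/
theorem diverging_intercept_bounds {Ω : Type*} [MeasurableSpace Ω] (μ : Measure Ω)
    [IsProbabilityMeasure μ] {p : ℕ} (X : Ω → Fin p → ℝ) (hXm : AEMeasurable X μ)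
    (β₁ : ℝ) (β : Fin p → ℝ)
    (hMGFpos : Integrable (fun ω => Real.exp (∑ j, β j * X ω j)) μ)
    (hMGFneg : Integrable (fun ω => Real.exp (-∑ j, β j * X ω j)) μ)
    (πN : ℝ) (hπN : πN = ∫ ω, logistic (β₁ + ∑ j, β j * X ω j) ∂μ)
    (hπ : πN ∈ Set.Ioo (0 : ℝ) 1) :
    (1 / πN) * (1 - πN) / (∫ ω, Real.exp (-∑ j, β j * X ω j) ∂μ) ≤ Real.exp (-β₁) ∧
      Real.exp (-β₁) ≤ (1 / πN) * ∫ ω, Real.exp (∑ j, β j * X ω j) ∂μ := by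
  set S : Ω → ℝ := fun ω => ∑ j, β j * X ω j
  have hu : AEMeasurable (fun ω => β₁ + S ω) μ := by fun_prop
  have hexp_pos : (fun ω => exp (β₁ + S ω)) = fun ω => exp β₁ * exp (S ω) := by
    simp only [exp_add]
  have hexp_neg : (fun ω => exp (-(β₁ + S ω))) = fun ω => exp (-β₁) * exp (-S ω) := by
    simp only [neg_add, exp_add]
  have upper := integral_sigmoid_le_integral_exp (μ := μ) (u := fun ω => β₁ + S ω)
    (hexp_pos ▸ hMGFpos.const_mul _)
  have lower := one_sub_integral_sigmoid_le hu (hexp_neg ▸ hMGFneg.const_mul _)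
  rw [← logistic_eq_sigmoid, ← hπN, hexp_pos, integral_const_mul] at upper
  rw [← logistic_eq_sigmoid, ← hπN, hexp_neg, integral_const_mul] at lower
  have hMGFneg_pos : 0 < ∫ ω, exp (-S ω) ∂μ := integral_exp_pos hMGFneg
  constructor
  · rw [div_le_iff₀ hMGFneg_pos, one_div_mul_eq_div, div_le_iff₀ hπ.1]
    linarith
  · rw [one_div_mul_eq_div, le_div_iff₀ hπ.1, exp_neg, inv_mul_le_iff₀ (exp_pos β₁)]
    exact upper
end

section
/- Let (Z_{N,i})_{i≤N} be, for each N, i.i.d. real random variables, and let b_N > 0. If N^{−r} b_N^{−1−r} E[|Z_{N,1}|^{1+r}] → 0 for some 0 < r < 1, then N^{−1} Σ_{i=1}^N Z_{N,i} − E[Z_{N,1}] = o_p(b_N). -/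
/-!
Truncate every `Z_{N,i}` at level `T = N b_N` and write `m = E[(|W_N| / T)^(1+r)]`, so that
`N m = N^{-r} b_N^{-1-r} E|W_N|^{1+r} → 0`. By Markov, some `|Z_{N,i}| ≥ T` with probability at
most `N m`. Since `1 ≤ 1 + r ≤ 2`, truncation moves the mean by at most `T m` and leaves a second
moment at most `T² m`, so by Chebyshev the centred truncated sum exceeds `N b_N ε / 2` with
probability at most `4 N m / ε²`, while its mean is within `N T m ≤ N b_N ε / 2` of `N E[W_N]`.
-/

open MeasureTheory ProbabilityTheory Filter

section Truncation

variable {α : Type*} {T p : ℝ}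

lemma abs_truncation_sub_le (X : α → ℝ) (hT : 0 < T) (hp : 1 ≤ p) (x : α) :
    |truncation X T x - X x| ≤ T * (|X x| / T) ^ p := by
  rcases lt_or_ge |X x| T with h | h
  · rw [truncation_eq_self h, sub_self, abs_zero]
    positivity
  have h_trunc : |truncation X T x - X x| ≤ |X x| := by
    simp only [truncation, Set.indicator, id, Function.comp_apply]
    split_ifs <;> simp
  calc |truncation X T x - X x| ≤ |X x| := h_trunc
    _ = T * (|X x| / T) := by field_simp
    _ ≤ T * (|X x| / T) ^ p := by
      gcongr
      exact Real.self_le_rpow_of_one_le ((one_le_div hT).2 h) hp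

lemma truncation_sq_le (X : α → ℝ) (hT : 0 < T) (hp₀ : 0 ≤ p) (hp₂ : p ≤ 2) (x : α) :
    truncation X T x ^ 2 ≤ T ^ 2 * (|X x| / T) ^ p := by
  set y := |truncation X T x| / T
  have hy₀ : 0 ≤ y := by positivity
  have hy₁ : y ≤ 1 :=
    (div_le_one hT).2 <| (abs_truncation_le_bound X T x).trans_eq (abs_of_pos hT)
  calc truncation X T x ^ 2 = T ^ 2 * y ^ (2 : ℝ) := by
        rw [Real.rpow_two, div_pow, sq_abs]; field_simp
    _ ≤ T ^ 2 * y ^ p := by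
      gcongr T ^ 2 * ?_
      exact Real.rpow_le_rpow_of_exponent_ge' hy₀ hy₁ hp₀ hp₂
    _ ≤ T ^ 2 * (|X x| / T) ^ p := by
      gcongr ?_ * ?_ ^ _
      exact div_le_div_of_nonneg_right (abs_truncation_le_abs_self X T x) hT.le

end Truncation

section Moments

variable {Ω : Type*} [MeasurableSpace Ω] {μ : Measure Ω} [IsFiniteMeasure μ] {X : Ω → ℝ}
  {T p : ℝ}

lemma measure_le_abs_le_integral_rpow (hT : 0 < T) (hp : 0 < p)
    (hmom : Integrable (fun ω ↦ (|X ω| / T) ^ p) μ) :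
    μ {ω | T ≤ |X ω|} ≤ ENNReal.ofReal (∫ ω, (|X ω| / T) ^ p ∂μ) := by
  have h_markov := mul_meas_ge_le_integral_of_nonneg
    (Eventually.of_forall fun ω ↦ by positivity) hmom 1
  rw [one_mul] at h_markov
  calc μ {ω | T ≤ |X ω|} ≤ μ {ω | 1 ≤ (|X ω| / T) ^ p} :=
        measure_mono fun ω hω ↦ Real.one_le_rpow ((one_le_div hT).2 hω) hp.le
    _ = ENNReal.ofReal (μ.real {ω | 1 ≤ (|X ω| / T) ^ p}) :=
        (ofReal_measureReal (measure_ne_top _ _)).symm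
    _ ≤ _ := ENNReal.ofReal_le_ofReal h_markov

lemma abs_integral_truncation_sub_le (hX : Integrable X μ) (hT : 0 < T) (hp : 1 ≤ p)
    (hmom : Integrable (fun ω ↦ (|X ω| / T) ^ p) μ) :
    |∫ ω, truncation X T ω ∂μ - ∫ ω, X ω ∂μ| ≤ T * ∫ ω, (|X ω| / T) ^ p ∂μ := by
  rw [← integral_sub (hX.1.integrable_truncation) hX, ← integral_const_mul]
  exact (abs_integral_le_integral_abs).trans <|
    integral_mono (hX.1.integrable_truncation.sub hX).abs (hmom.const_mul T)
      (abs_truncation_sub_le X hT hp)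

lemma integral_truncation_sq_le (hX : AEStronglyMeasurable X μ) (hT : 0 < T) (hp₀ : 0 ≤ p)
    (hp₂ : p ≤ 2) (hmom : Integrable (fun ω ↦ (|X ω| / T) ^ p) μ) :
    ∫ ω, truncation X T ω ^ 2 ∂μ ≤ T ^ 2 * ∫ ω, (|X ω| / T) ^ p ∂μ := by
  rw [← integral_const_mul]
  exact integral_mono (hX.memLp_truncation (p := 2)).integrable_sq (hmom.const_mul _)
    (truncation_sq_le X hT hp₀ hp₂)

end Moments

lemma setOf_add_le_abs_sum_sub_subset {Ω ι : Type*} [Fintype ι] (X : ι → Ω → ℝ)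
    {T c d e m : ℝ} (he : |e - m| ≤ d) :
    {ω | c + d ≤ |∑ i, X i ω - m|} ⊆
      (⋃ i, {ω | T ≤ |X i ω|}) ∪ {ω | c ≤ |(∑ i, truncation (X i) T) ω - e|} := by
  intro ω hω
  by_contra h_not
  simp only [Set.mem_union, Set.mem_iUnion, Set.mem_ofPred_eq, not_or, not_exists, not_le,
    Finset.sum_apply] at h_not hω
  obtain ⟨h_small, h_dev⟩ := h_not
  rw [Finset.sum_congr rfl fun i _ ↦ truncation_eq_self (h_small i)] at h_dev
  have := abs_sub_le (∑ i, X i ω) e m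
  linarith

section Sums

variable {Ω ι : Type*} [MeasurableSpace Ω] {μ : Measure Ω} [IsProbabilityMeasure μ]
  [Fintype ι] {X : ι → Ω → ℝ} {W : Ω → ℝ} {T : ℝ}

lemma variance_sum_truncation_le (hindep : Pairwise fun i j ↦ IndepFun (X i) (X j) μ)
    (hident : ∀ i, IdentDistrib (X i) W μ μ) :
    variance (∑ i, truncation (X i) T) μ ≤
      Fintype.card ι * ∫ ω, truncation W T ω ^ 2 ∂μ := by
  have h_meas : Measurable (Set.indicator (Set.Ioc (-T) T) (id : ℝ → ℝ)) :=
    measurable_id.indicator measurableSet_Ioc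
  have h_each (i : ι) : variance (truncation (X i) T) μ ≤ ∫ ω, truncation W T ω ^ 2 ∂μ :=
    calc variance (truncation (X i) T) μ ≤ ∫ ω, truncation (X i) T ω ^ 2 ∂μ :=
          variance_le_expectation_sq (hident i).aemeasurable_fst.aestronglyMeasurable.truncation
      _ = ∫ ω, truncation W T ω ^ 2 ∂μ :=
          ((hident i).truncation.comp (measurable_id.pow_const 2)).integral_eq
  rw [IndepFun.variance_sum
    (fun i _ ↦ (hident i).aemeasurable_fst.aestronglyMeasurable.memLp_truncation)
    fun i _ j _ hij ↦ (hindep hij).comp h_meas h_meas]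
  calc ∑ i, variance (truncation (X i) T) μ ≤ ∑ _i : ι, ∫ ω, truncation W T ω ^ 2 ∂μ :=
        Finset.sum_le_sum fun i _ ↦ h_each i
    _ = Fintype.card ι * ∫ ω, truncation W T ω ^ 2 ∂μ := by simp

lemma measure_add_le_abs_sum_sub_le (hindep : Pairwise fun i j ↦ IndepFun (X i) (X j) μ)
    (hident : ∀ i, IdentDistrib (X i) W μ μ) (hW : Integrable W μ) {p c : ℝ} (hT : 0 < T)
    (hc : 0 < c) (hp₁ : 1 ≤ p) (hp₂ : p ≤ 2) (hmom : Integrable (fun ω ↦ (|W ω| / T) ^ p) μ) :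
    μ {ω | c + Fintype.card ι * (T * ∫ ω, (|W ω| / T) ^ p ∂μ) ≤
        |∑ i, X i ω - Fintype.card ι * ∫ ω, W ω ∂μ|} ≤
      ENNReal.ofReal (Fintype.card ι * ∫ ω, (|W ω| / T) ^ p ∂μ) +
        ENNReal.ofReal (Fintype.card ι * (T ^ 2 * ∫ ω, (|W ω| / T) ^ p ∂μ) / c ^ 2) := by
  set n : ℝ := (Fintype.card ι : ℝ)
  set m := ∫ ω, (|W ω| / T) ^ p ∂μ
  set S := ∑ i, truncation (X i) T
  have hn : 0 ≤ n := by positivity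
  have h_mean : ∫ ω, S ω ∂μ = n * ∫ ω, truncation W T ω ∂μ := by
    simp only [S, Finset.sum_apply]
    rw [integral_finsetSum _ fun i _ ↦
      (hident i).aemeasurable_fst.aestronglyMeasurable.integrable_truncation,
      Finset.sum_congr rfl fun i _ ↦ (hident i).truncation.integral_eq]
    simp [n]
  have h_bias : |∫ ω, S ω ∂μ - n * ∫ ω, W ω ∂μ| ≤ n * (T * m) := by
    rw [h_mean, ← mul_sub, abs_mul, Nat.abs_cast]
    exact mul_le_mul_of_nonneg_left (abs_integral_truncation_sub_le hW hT hp₁ hmom) hn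
  have h_tail : μ (⋃ i, {ω | T ≤ |X i ω|}) ≤ ENNReal.ofReal (n * m) := by
    have h_each (i : ι) : μ {ω | T ≤ |X i ω|} ≤ ENNReal.ofReal m := by
      calc μ {ω | T ≤ |X i ω|} = μ {ω | T ≤ |W ω|} :=
            (hident i).measure_mem_eq (measurableSet_le measurable_const measurable_abs)
        _ ≤ ENNReal.ofReal m := measure_le_abs_le_integral_rpow hT (by linarith) hmom
    calc μ (⋃ i, {ω | T ≤ |X i ω|}) ≤ ∑ i, μ {ω | T ≤ |X i ω|} :=
          measure_iUnion_fintype_le _ _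
      _ ≤ ∑ _i : ι, ENNReal.ofReal m := Finset.sum_le_sum fun i _ ↦ h_each i
      _ = ENNReal.ofReal (n * m) := by
        rw [Finset.sum_const, Finset.card_univ, nsmul_eq_mul, ENNReal.ofReal_mul hn,
          ENNReal.ofReal_natCast]
  have h_chebyshev :
      μ {ω | c ≤ |S ω - ∫ ω, S ω ∂μ|} ≤ ENNReal.ofReal (n * (T ^ 2 * m) / c ^ 2) := by
    refine (meas_ge_le_variance_div_sq (memLp_finsetSum' _ fun i _ ↦
      (hident i).aemeasurable_fst.aestronglyMeasurable.memLp_truncation) hc).trans ?_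
    gcongr
    exact (variance_sum_truncation_le hindep hident).trans <| mul_le_mul_of_nonneg_left
      (integral_truncation_sq_le hW.1 hT (by linarith) hp₂ hmom) hn
  calc _ ≤ μ ((⋃ i, {ω | T ≤ |X i ω|}) ∪ {ω | c ≤ |S ω - ∫ ω, S ω ∂μ|}) :=
        measure_mono (setOf_add_le_abs_sum_sub_subset X h_bias)
    _ ≤ _ := (measure_union_le _ _).trans (add_le_add h_tail h_chebyshev)

end Sums

lemma mul_integral_rpow_div_mul {Ω : Type*} [MeasurableSpace Ω] (μ : Measure Ω) (W : Ω → ℝ)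
    {x y : ℝ} (hx : 0 < x) (hy : 0 < y) (r : ℝ) :
    x * ∫ ω, (|W ω| / (x * y)) ^ (1 + r) ∂μ =
      x ^ (-r) * y ^ (-(1 + r)) * ∫ ω, |W ω| ^ (1 + r) ∂μ := by
  simp_rw [Real.div_rpow (abs_nonneg _) (mul_pos hx hy).le]
  rw [integral_div, Real.mul_rpow hx.le hy.le, Real.rpow_add hx, Real.rpow_one,
    Real.rpow_neg hx.le, Real.rpow_neg hy.le]
  have : 0 < x ^ r := Real.rpow_pos_of_pos hx r
  field_simp

lemma measure_le_dist_average_sub_le {Ω : Type*} [MeasurableSpace Ω] {μ : Measure Ω}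
    [IsProbabilityMeasure μ] {n : ℕ} (hn : 0 < n) {X : Fin n → Ω → ℝ} {W : Ω → ℝ}
    (hindep : Pairwise fun i j ↦ IndepFun (X i) (X j) μ)
    (hident : ∀ i, IdentDistrib (X i) W μ μ) (hW : Integrable W μ) {b r ε : ℝ} (hb : 0 < b)
    (hr₀ : 0 ≤ r) (hr₁ : r ≤ 1) (hε : 0 < ε) (hmom : Integrable (fun ω ↦ |W ω| ^ (1 + r)) μ)
    (hsmall : (n : ℝ) ^ (-r) * b ^ (-(1 + r)) * ∫ ω, |W ω| ^ (1 + r) ∂μ ≤ ε / 2) :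
    μ {ω | ε ≤ dist (((n : ℝ)⁻¹ * ∑ i, X i ω - ∫ ω', W ω' ∂μ) / b) 0} ≤
      ENNReal.ofReal ((1 + 4 / ε ^ 2) * ((n : ℝ) ^ (-r) * b ^ (-(1 + r)) *
        ∫ ω, |W ω| ^ (1 + r) ∂μ)) := by
  have hn' : (0 : ℝ) < n := Nat.cast_pos.2 hn
  set T := n * b
  have hT : 0 < T := mul_pos hn' hb
  have ha := mul_integral_rpow_div_mul μ W hn' hb r
  set m := ∫ ω, (|W ω| / T) ^ (1 + r) ∂μ with hm
  set a := (n : ℝ) ^ (-r) * b ^ (-(1 + r)) * ∫ ω, |W ω| ^ (1 + r) ∂μ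
  set c := T * (ε / 2)
  have hc : 0 < c := by positivity
  have hmom' : Integrable (fun ω ↦ (|W ω| / T) ^ (1 + r)) μ :=
    (hmom.div_const _).congr <| ae_of_all _ fun ω ↦ (Real.div_rpow (abs_nonneg _) hT.le _).symm
  have h_bound := measure_add_le_abs_sum_sub_le hindep hident hW hT hc
    (by linarith) (by linarith) hmom'
  rw [Fintype.card_fin, ← hm] at h_bound
  have h_event : {ω | ε ≤ dist (((n : ℝ)⁻¹ * ∑ i, X i ω - ∫ ω', W ω' ∂μ) / b) 0} ⊆
      {ω | c + n * (T * m) ≤ |∑ i, X i ω - n * ∫ ω, W ω ∂μ|} := by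
    intro ω hω
    have h_rescale : ((n : ℝ)⁻¹ * ∑ i, X i ω - ∫ ω', W ω' ∂μ) / b =
        (∑ i, X i ω - n * ∫ ω', W ω' ∂μ) / T := by
      simp only [T]
      field_simp
    rw [Set.mem_ofPred_eq, Real.dist_0_eq_abs, h_rescale, abs_div, abs_of_pos hT,
      le_div_iff₀ hT] at hω
    have h_bias : n * (T * m) ≤ T * (ε / 2) := by
      rw [mul_left_comm, ha]
      exact mul_le_mul_of_nonneg_left hsmall hT.le
    rw [Set.mem_ofPred_eq, show c = T * (ε / 2) from rfl]
    linarith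
  have h_var : n * (T ^ 2 * m) / c ^ 2 = 4 / ε ^ 2 * a := by
    rw [mul_left_comm, ha]
    simp only [c]
    field_simp
    ring
  refine (measure_mono h_event).trans (h_bound.trans_eq ?_)
  rw [h_var, ha, ← ENNReal.ofReal_add (by positivity) (by positivity)]
  congr 1
  ring

theorem triangular_array_wlln_general {Ω : Type*} [mΩ : MeasurableSpace Ω] (μ : Measure Ω)
    [IsProbabilityMeasure μ] (Z : (N : ℕ) → Fin N → Ω → ℝ) (W : ℕ → Ω → ℝ)
    (hindep : ∀ N, iIndepFun (Z N) μ)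
    (hident : ∀ N, ∀ i : Fin N, IdentDistrib (Z N i) (W N) μ μ)
    (hWint : ∀ N, Integrable (W N) μ)
    (b : ℕ → ℝ) (hb : ∀ N, 0 < b N) (r : ℝ) (hr : r ∈ Set.Ioo (0 : ℝ) 1)
    (hmom : ∀ N, Integrable (fun ω => |W N ω| ^ (1 + r)) μ)
    (hrate : Filter.Tendsto
      (fun N : ℕ => (N : ℝ) ^ (-r) * (b N) ^ (-(1 + r)) * ∫ ω, |W N ω| ^ (1 + r) ∂μ)
      Filter.atTop (nhds 0)) :
    TendstoInMeasure μ
      (fun (N : ℕ) ω => ((N : ℝ)⁻¹ * (∑ i, Z N i ω) - ∫ ω', W N ω' ∂μ) / b N)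
      Filter.atTop (fun _ => (0 : ℝ)) := by
  rw [tendstoInMeasure_iff_dist]
  intro ε hε
  have h_bound : ∀ᶠ N : ℕ in atTop,
      μ {ω | ε ≤ dist (((N : ℝ)⁻¹ * (∑ i, Z N i ω) - ∫ ω', W N ω' ∂μ) / b N) 0} ≤
        ENNReal.ofReal ((1 + 4 / ε ^ 2) *
          ((N : ℝ) ^ (-r) * (b N) ^ (-(1 + r)) * ∫ ω, |W N ω| ^ (1 + r) ∂μ)) := by
    filter_upwards [hrate.eventually (ge_mem_nhds (half_pos hε)), eventually_ge_atTop 1]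
      with N h_small hN
    exact measure_le_dist_average_sub_le hN (fun i j hij ↦ (hindep N).indepFun hij) (hident N)
      (hWint N) (hb N) hr.1.le hr.2.le hε (hmom N) h_small
  have h_lim := ENNReal.tendsto_ofReal (hrate.const_mul (1 + 4 / ε ^ 2))
  rw [mul_zero, ENNReal.ofReal_zero] at h_lim
  exact tendsto_of_tendsto_of_tendsto_of_le_of_le' tendsto_const_nhds h_lim
    (Eventually.of_forall fun _ ↦ zero_le) h_bound

/-- Triangular-array weak law of large numbers with rate: if for each `N` the variables
`Z_{N,1}, …, Z_{N,N}` are i.i.d. (identically distributed as `W_N`) and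
`N^{−r} b_N^{−1−r} E[|W_N|^{1+r}] → 0` for some `0 < r < 1` and `b_N > 0`, then
`N⁻¹ Σ_{i=1}^N Z_{N,i} − E[W_N] = o_p(b_N)`, i.e. the normalized average converges
to `0` in probability. -/
theorem triangular_array_wlln {Ω : Type*} [mΩ : MeasurableSpace Ω] (μ : Measure Ω)
    [IsProbabilityMeasure μ] (Z : (N : ℕ) → Fin N → Ω → ℝ) (W : ℕ → Ω → ℝ)
    (hmeas : ∀ N i, Measurable (Z N i)) (hWmeas : ∀ N, Measurable (W N))
    (hindep : ∀ N, iIndepFun (Z N) μ)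
    (hident : ∀ N, ∀ i : Fin N, IdentDistrib (Z N i) (W N) μ μ)
    (hWint : ∀ N, Integrable (W N) μ)
    (b : ℕ → ℝ) (hb : ∀ N, 0 < b N) (r : ℝ) (hr : r ∈ Set.Ioo (0 : ℝ) 1)
    (hmom : ∀ N, Integrable (fun ω => |W N ω| ^ (1 + r)) μ)
    (hrate : Filter.Tendsto
      (fun N : ℕ => (N : ℝ) ^ (-r) * (b N) ^ (-(1 + r)) * ∫ ω, |W N ω| ^ (1 + r) ∂μ)
      Filter.atTop (nhds 0)) :
    TendstoInMeasure μ
      (fun (N : ℕ) ω => ((N : ℝ)⁻¹ * (∑ i, Z N i ω) - ∫ ω', W N ω' ∂μ) / b N)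
      Filter.atTop (fun _ => (0 : ℝ)) :=
  triangular_array_wlln_general (mΩ := mΩ) μ Z W hindep hident hWint b hb r hr hmom hrate
end

section
/- Suppose R ⟂ Y | X, π(X) = E[R|X] ∈ (0,1) a.s., m(X) = E[Y|X], and E[(Y − m(X))² | X] ≥ σ₁² > 0, E[(Y − μ(X))² | X] ≤ σ₂², Var(Y) ≤ σ₂² for a fixed function μ. Let ψ(Z) = μ(X) − θ₀ + (R/π(X))(Y − μ(X)) with θ₀ = E[Y] and a^{−1} = E[1/π(X)]. Then σ₁² ≤ a·Var(ψ(Z)) ≤ σ₂², i.e., Var(ψ(Z)) ≍ a^{−1}. -/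
/-!
Write `π = E[R | X]` and `T = Y - μf(X)`. Conditional independence of `R` and `Y` given `X`
makes the finite measures `R dμ` and `π dμ` have the same image under `(X, Y)`: on a rectangle
this is `E[R 1{Y ∈ v} | X] = π P(Y ∈ v | X)`. Hence `E[(R / π) H(X, Y)] = E[H(X, Y)]` for every
`H`, and since `π` is a function of `X` and `R² = R`, expanding the square of `ψ + θ₀` gives
`Var ψ = Var Y + E[(π⁻¹ - 1) E[T² | X]]`. Both bounds then follow from
`σ₁² ≤ Var(Y | X) ≤ E[T² | X] ≤ σ₂²`, `σ₁² ≤ Var Y ≤ σ₂²` and `E[π⁻¹ - 1] = a⁻¹ - 1`.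
-/

open MeasureTheory ProbabilityTheory

section WithDensityMap

variable {Ω γ : Type*} [MeasurableSpace Ω] [MeasurableSpace γ] {μ : Measure Ω}
  {f : Ω → ℝ} {Z : Ω → γ} {H : γ → ℝ}

lemma integral_map_withDensity_ofReal (hf : Measurable f) (hf0 : 0 ≤ᵐ[μ] f) (hZ : Measurable Z)
    (hH : Measurable H) :
    ∫ z, H z ∂(μ.withDensity fun ω => ENNReal.ofReal (f ω)).map Z = ∫ ω, f ω * H (Z ω) ∂μ := by
  rw [integral_map hZ.aemeasurable hH.aestronglyMeasurable]
  refine (integral_withDensity_eq_integral_smul (measurable_real_toNNReal.comp hf) _).trans ?_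
  refine integral_congr_ae ?_
  filter_upwards [hf0] with ω h
  simp [NNReal.smul_def, Real.coe_toNNReal _ h]

lemma integrable_map_withDensity_ofReal_iff (hf : Measurable f) (hf0 : 0 ≤ᵐ[μ] f)
    (hZ : Measurable Z) (hH : Measurable H) :
    Integrable H ((μ.withDensity fun ω => ENNReal.ofReal (f ω)).map Z) ↔
      Integrable (fun ω => f ω * H (Z ω)) μ := by
  rw [integrable_map_measure hH.aestronglyMeasurable hZ.aemeasurable]
  refine (integrable_withDensity_iff_integrable_smul (measurable_real_toNNReal.comp hf)).trans ?_
  refine integrable_congr ?_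
  filter_upwards [hf0] with ω h
  simp [NNReal.smul_def, Real.coe_toNNReal _ h]

end WithDensityMap

lemma setIntegral_mul_condExp {Ω : Type*} {m mΩ : MeasurableSpace Ω} {μ : Measure Ω}
    (hm : m ≤ mΩ) [SigmaFinite (μ.trim hm)] {w f : Ω → ℝ} (hw : StronglyMeasurable[m] w)
    (hf : Integrable f μ) (hwf : Integrable (w * f) μ) {s : Set Ω} (hs : MeasurableSet[m] s) :
    ∫ ω in s, w ω * (μ[f|m]) ω ∂μ = ∫ ω in s, w ω * f ω ∂μ := by
  refine (setIntegral_congr_ae (hm s hs) ?_).trans (setIntegral_condExp hm hwf hs)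
  exact (condExp_mul_of_stronglyMeasurable_left hw hwf hf).mono fun ω h _ => h.symm

lemma integral_inv_sub_one_mul_condExp {Ω : Type*} {m mΩ : MeasurableSpace Ω}
    {μ : Measure Ω} (hm : m ≤ mΩ) [SigmaFinite (μ.trim hm)] {π f : Ω → ℝ}
    (hπ : StronglyMeasurable[m] π) (hf : Integrable f μ)
    (hfπ : Integrable (fun ω => f ω / π ω) μ) :
    ∫ ω, ((π ω)⁻¹ - 1) * (μ[f|m]) ω ∂μ = ∫ ω, f ω / π ω ∂μ - ∫ ω, f ω ∂μ := by
  have hw : StronglyMeasurable[m] fun ω => (π ω)⁻¹ - 1 :=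
    (hπ.measurable.inv.sub_const 1).stronglyMeasurable
  have hwf : Integrable (fun ω => ((π ω)⁻¹ - 1) * f ω) μ :=
    (hfπ.sub hf).congr (.of_forall fun ω => by simp only [Pi.sub_apply]; ring)
  rw [← integral_sub hfπ hf]
  simpa [div_eq_inv_mul, sub_mul] using setIntegral_mul_condExp hm hw hf hwf .univ

lemma condVar_ae_le_condExp_sub_sq {Ω : Type*} {m mΩ : MeasurableSpace Ω} {μ : Measure Ω}
    [IsFiniteMeasure μ] (hm : m ≤ mΩ) {Y c : Ω → ℝ} (hY : MemLp Y 2 μ)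
    (hc : StronglyMeasurable[m] c) (hc2 : MemLp c 2 μ) :
    Var[Y; μ | m] ≤ᵐ[μ] μ[(Y - c) ^ 2 | m] := by
  have hcond : μ[Y - c|m] =ᵐ[μ] μ[Y|m] - c := by
    have := condExp_sub (hY.integrable one_le_two) (hc2.integrable one_le_two) m
    rwa [condExp_of_stronglyMeasurable hm hc (hc2.integrable one_le_two)] at this
  have hshift : Var[Y - c; μ | m] =ᵐ[μ] Var[Y; μ | m] := by
    refine condExp_congr_ae ?_
    filter_upwards [hcond] with ω h
    simp [h]
  filter_upwards [hshift, condVar_ae_le_condExp_sq hm (hY.sub hc2)] with ω h1 h2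
  exact h1 ▸ h2

lemma le_variance_of_ae_le_condVar {Ω : Type*} {m mΩ : MeasurableSpace Ω} {μ : Measure Ω}
    [IsProbabilityMeasure μ] (hm : m ≤ mΩ) {Y : Ω → ℝ} (hY : MemLp Y 2 μ) {l : ℝ}
    (hl : ∀ᵐ ω ∂μ, l ≤ Var[Y; μ | m] ω) : l ≤ variance Y μ := by
  rw [← integral_condVar_add_variance_condExp hm hY]
  have := integral_mono_ae (integrable_const l) integrable_condVar hl
  simp only [integral_const, probReal_univ, smul_eq_mul, one_mul] at this
  linarith [variance_nonneg (μ[Y|m]) μ]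

lemma mul_integral_le_integral_mul_and_integral_mul_le {Ω : Type*} {mΩ : MeasurableSpace Ω}
    {μ : Measure Ω} {w v : Ω → ℝ} {l u : ℝ} (hw : Integrable w μ) (hw0 : 0 ≤ᵐ[μ] w)
    (hv : AEStronglyMeasurable v μ) (hl : ∀ᵐ ω ∂μ, l ≤ v ω) (hu : ∀ᵐ ω ∂μ, v ω ≤ u) :
    l * ∫ ω, w ω ∂μ ≤ ∫ ω, w ω * v ω ∂μ ∧ ∫ ω, w ω * v ω ∂μ ≤ u * ∫ ω, w ω ∂μ := by
  have hwv : Integrable (fun ω => w ω * v ω) μ := hw.mul_bdd hv (c := max |l| |u|) <| by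
    filter_upwards [hl, hu] with ω h1 h2
    exact abs_le_max_abs_abs h1 h2
  rw [← integral_const_mul, ← integral_const_mul]
  constructor
  · refine integral_mono_ae (hw.const_mul l) hwv ?_
    filter_upwards [hw0, hl] with ω h0 h1
    rw [mul_comm]
    exact mul_le_mul_of_nonneg_left h1 h0
  · refine integral_mono_ae hwv (hw.const_mul u) ?_
    filter_upwards [hw0, hu] with ω h0 h1
    rw [mul_comm u]
    exact mul_le_mul_of_nonneg_left h1 h0

lemma nonneg_of_binary {Ω : Type*} {R : Ω → ℝ} (hRbin : ∀ ω, R ω = 0 ∨ R ω = 1) (ω : Ω) :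
    0 ≤ R ω := by
  rcases hRbin ω with h | h <;> simp [h]

lemma integrable_of_binary {Ω : Type*} {mΩ : MeasurableSpace Ω} {μ : Measure Ω}
    [IsFiniteMeasure μ] {R : Ω → ℝ} (hR : Measurable R) (hRbin : ∀ ω, R ω = 0 ∨ R ω = 1) :
    Integrable R μ :=
  .of_bound hR.aestronglyMeasurable 1 <| .of_forall fun ω => by
    rcases hRbin ω with h | h <;> simp [h]

section CondIndep

variable {Ω α β : Type*} {m mΩ : MeasurableSpace Ω} [StandardBorelSpace Ω] {hm : m ≤ mΩ}
  {μ : Measure Ω} [IsFiniteMeasure μ] {R : Ω → ℝ} [MeasurableSpace β] {Y : Ω → β}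

lemma setIntegral_inter_preimage_eq_condExp (hR : Measurable R)
    (hRbin : ∀ ω, R ω = 0 ∨ R ω = 1) (hY : Measurable Y) (hCI : CondIndepFun m hm R Y μ)
    {s : Set Ω} (hs : MeasurableSet[m] s) {v : Set β} (hv : MeasurableSet v) :
    ∫ ω in s ∩ Y ⁻¹' v, R ω ∂μ = ∫ ω in s ∩ Y ⁻¹' v, (μ[R|m]) ω ∂μ := by
  have hRA : R = (R ⁻¹' {1}).indicator fun _ => 1 := by
    funext ω; rcases hRbin ω with h | h <;> simp [h, Set.indicator]
  have hprod := (condIndepFun_iff_condExp_inter_preimage_eq_mul hR hY).mp hCI {1} v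
    (measurableSet_singleton 1) hv
  rw [← hRA] at hprod
  have hYv : MeasurableSet (Y ⁻¹' v) := hY hv
  have hAYv : MeasurableSet (R ⁻¹' {1} ∩ Y ⁻¹' v) := (hR (measurableSet_singleton 1)).inter hYv
  have hπ1 : (μ[R|m]) * (Y ⁻¹' v).indicator 1 = (Y ⁻¹' v).indicator (μ[R|m]) := by
    funext ω; by_cases h : ω ∈ Y ⁻¹' v <;> simp [h]
  calc ∫ ω in s ∩ Y ⁻¹' v, R ω ∂μ
      = ∫ ω in s, (R ⁻¹' {1} ∩ Y ⁻¹' v).indicator (fun _ => 1) ω ∂μ := by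
        rw [← setIntegral_indicator hYv, Set.inter_comm, ← Set.indicator_indicator, ← hRA]
    _ = ∫ ω in s, (μ⟦R ⁻¹' {1} ∩ Y ⁻¹' v | m⟧) ω ∂μ :=
        (setIntegral_condExp hm ((integrable_const 1).indicator hAYv) hs).symm
    _ = ∫ ω in s, (μ[R|m]) ω * (μ⟦Y ⁻¹' v | m⟧) ω ∂μ :=
        setIntegral_congr_ae (hm s hs) (hprod.mono fun ω h _ => h)
    _ = ∫ ω in s, (μ[R|m]) ω * (Y ⁻¹' v).indicator 1 ω ∂μ :=
        setIntegral_mul_condExp hm stronglyMeasurable_condExp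
          ((integrable_const 1).indicator hYv) (hπ1 ▸ integrable_condExp.indicator hYv) hs
    _ = ∫ ω in s ∩ Y ⁻¹' v, (μ[R|m]) ω ∂μ := by
        rw [← setIntegral_indicator hYv, ← hπ1]
        rfl

variable [MeasurableSpace α] {X : Ω → α}

lemma map_withDensity_eq_of_condIndepFun (hR : Measurable R) (hRbin : ∀ ω, R ω = 0 ∨ R ω = 1)
    (hY : Measurable Y) (hCI : CondIndepFun m hm R Y μ) (hX : Measurable X)
    (hmX : m = MeasurableSpace.comap X inferInstance) :
    (μ.withDensity fun ω => ENNReal.ofReal (R ω)).map (fun ω => (X ω, Y ω)) =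
      (μ.withDensity fun ω => ENNReal.ofReal ((μ[R|m]) ω)).map (fun ω => (X ω, Y ω)) := by
  have hXY : Measurable fun ω => (X ω, Y ω) := hX.prodMk hY
  have hRint : Integrable R μ := integrable_of_binary hR hRbin
  have hR0 : 0 ≤ᵐ[μ] R := .of_forall (nonneg_of_binary hRbin)
  have hπ0 : 0 ≤ᵐ[μ] μ[R|m] := condExp_nonneg hR0
  have rect : ∀ u v, MeasurableSet u → MeasurableSet v →
      (μ.withDensity fun ω => ENNReal.ofReal (R ω)).map (fun ω => (X ω, Y ω)) (u ×ˢ v) =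
        (μ.withDensity fun ω => ENNReal.ofReal ((μ[R|m]) ω)).map (fun ω => (X ω, Y ω))
          (u ×ˢ v) := by
    intro u v hu hv
    have hXu : MeasurableSet[m] (X ⁻¹' u) := by rw [hmX]; exact ⟨u, hu, rfl⟩
    rw [Measure.map_apply hXY (hu.prod hv), Measure.map_apply hXY (hu.prod hv),
      Set.mk_preimage_prod, withDensity_apply _ ((hX hu).inter (hY hv)),
      withDensity_apply _ ((hX hu).inter (hY hv)),
      ← ofReal_integral_eq_lintegral_ofReal hRint.integrableOn (ae_restrict_of_ae hR0),
      ← ofReal_integral_eq_lintegral_ofReal integrable_condExp.integrableOn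
        (ae_restrict_of_ae hπ0),
      setIntegral_inter_preimage_eq_condExp hR hRbin hY hCI hXu hv]
  have := isFiniteMeasure_withDensity_ofReal hRint.2
  refine ext_of_generate_finite _ generateFrom_prod.symm isPiSystem_prod ?_ ?_
  · rintro _ ⟨u, hu, v, hv, rfl⟩
    exact rect u v hu hv
  · simpa using rect Set.univ Set.univ .univ .univ

lemma integral_mul_comp_eq_integral_condExp_mul (hR : Measurable R)
    (hRbin : ∀ ω, R ω = 0 ∨ R ω = 1) (hY : Measurable Y) (hCI : CondIndepFun m hm R Y μ)
    (hX : Measurable X) (hmX : m = MeasurableSpace.comap X inferInstance)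
    {H : α × β → ℝ} (hH : Measurable H) :
    ∫ ω, R ω * H (X ω, Y ω) ∂μ = ∫ ω, (μ[R|m]) ω * H (X ω, Y ω) ∂μ := by
  have hR0 : 0 ≤ᵐ[μ] R := .of_forall (nonneg_of_binary hRbin)
  rw [← integral_map_withDensity_ofReal hR hR0 (hX.prodMk hY) hH,
    ← integral_map_withDensity_ofReal (stronglyMeasurable_condExp.mono hm).measurable
      (condExp_nonneg hR0) (hX.prodMk hY) hH,
    map_withDensity_eq_of_condIndepFun hR hRbin hY hCI hX hmX]

lemma integrable_mul_comp_iff_integrable_condExp_mul (hR : Measurable R)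
    (hRbin : ∀ ω, R ω = 0 ∨ R ω = 1) (hY : Measurable Y) (hCI : CondIndepFun m hm R Y μ)
    (hX : Measurable X) (hmX : m = MeasurableSpace.comap X inferInstance)
    {H : α × β → ℝ} (hH : Measurable H) :
    Integrable (fun ω => R ω * H (X ω, Y ω)) μ ↔
      Integrable (fun ω => (μ[R|m]) ω * H (X ω, Y ω)) μ := by
  have hR0 : 0 ≤ᵐ[μ] R := .of_forall (nonneg_of_binary hRbin)
  rw [← integrable_map_withDensity_ofReal_iff hR hR0 (hX.prodMk hY) hH,
    ← integrable_map_withDensity_ofReal_iff (stronglyMeasurable_condExp.mono hm).measurable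
      (condExp_nonneg hR0) (hX.prodMk hY) hH,
    map_withDensity_eq_of_condIndepFun hR hRbin hY hCI hX hmX]

lemma integrable_and_integral_div_condExp_mul (hR : Measurable R)
    (hRbin : ∀ ω, R ω = 0 ∨ R ω = 1) (hY : Measurable Y) (hCI : CondIndepFun m hm R Y μ)
    (hX : Measurable X) (hmX : m = MeasurableSpace.comap X inferInstance)
    (hπ : ∀ᵐ ω ∂μ, 0 < (μ[R|m]) ω) (H : α × β × ℝ → ℝ) (hH : Measurable H)
    (hint : Integrable (fun ω => R ω / (μ[R|m]) ω * H (X ω, Y ω, (μ[R|m]) ω)) μ) :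
    Integrable (fun ω => H (X ω, Y ω, (μ[R|m]) ω)) μ ∧
      ∫ ω, R ω / (μ[R|m]) ω * H (X ω, Y ω, (μ[R|m]) ω) ∂μ =
        ∫ ω, H (X ω, Y ω, (μ[R|m]) ω) ∂μ := by
  -- `π = g ∘ X`, so the integrand `H(X, Y, π) / π` is a function of `(X, Y)`
  obtain ⟨g, hg, hπg⟩ : ∃ g : α → ℝ, Measurable g ∧ μ[R|m] = g ∘ X :=
    Measurable.exists_eq_measurable_comp (hmX ▸ stronglyMeasurable_condExp.measurable)
  have hgX : ∀ ω, g (X ω) = (μ[R|m]) ω := fun ω => by rw [hπg]; rfl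
  have hH' : Measurable fun z : α × β => H (z.1, z.2, g z.1) / g z.1 := by fun_prop
  have hRH : (fun ω => R ω / (μ[R|m]) ω * H (X ω, Y ω, (μ[R|m]) ω)) =
      fun ω => R ω * (H (X ω, Y ω, g (X ω)) / g (X ω)) := by
    funext ω; rw [hgX]; ring
  have hπH : (fun ω => (μ[R|m]) ω * (H (X ω, Y ω, g (X ω)) / g (X ω))) =ᵐ[μ]
      fun ω => H (X ω, Y ω, (μ[R|m]) ω) := by
    filter_upwards [hπ] with ω h
    rw [hgX]
    exact mul_div_cancel₀ _ h.ne'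
  rw [hRH] at hint ⊢
  refine ⟨?_, ?_⟩
  · exact ((integrable_mul_comp_iff_integrable_condExp_mul hR hRbin hY hCI hX hmX hH').mp
      hint).congr hπH
  · rw [integral_mul_comp_eq_integral_condExp_mul hR hRbin hY hCI hX hmX hH']
    exact integral_congr_ae hπH

end CondIndep

/-- Augmented inverse-probability-weighted outcome; the influence function `ψ` of the theorem is
`aipw μf X R Y π - θ₀`. -/
noncomputable def aipw {Ω α : Type*} (b : α → ℝ) (X : Ω → α) (R Y π : Ω → ℝ) (ω : Ω) : ℝ :=
  b (X ω) + R ω / π ω * (Y ω - b (X ω))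

section AIPW

variable {Ω α : Type*} {m mΩ : MeasurableSpace Ω} [StandardBorelSpace Ω] {hm : m ≤ mΩ}
  {μ : Measure Ω} [IsProbabilityMeasure μ] [MeasurableSpace α] {X : Ω → α} {R Y : Ω → ℝ}
  {b : α → ℝ}

lemma integral_aipw (hR : Measurable R) (hRbin : ∀ ω, R ω = 0 ∨ R ω = 1) (hY : Measurable Y)
    (hY1 : Integrable Y μ) (hCI : CondIndepFun m hm R Y μ) (hX : Measurable X)
    (hmX : m = MeasurableSpace.comap X inferInstance) (hπ : ∀ᵐ ω ∂μ, 0 < (μ[R|m]) ω)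
    (hb : Measurable b) (hb1 : Integrable (fun ω => b (X ω)) μ)
    (hψ1 : Integrable (aipw b X R Y (μ[R|m])) μ) :
    ∫ ω, aipw b X R Y (μ[R|m]) ω ∂μ = ∫ ω, Y ω ∂μ := by
  have hV1 : Integrable (fun ω => R ω / (μ[R|m]) ω * (Y ω - b (X ω))) μ :=
    (hψ1.sub hb1).congr (.of_forall fun ω => by simp [aipw])
  obtain ⟨-, hintV⟩ := integrable_and_integral_div_condExp_mul hR hRbin hY hCI hX hmX hπ
    (fun z => z.2.1 - b z.1) (by fun_prop) hV1
  dsimp only at hintV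
  rw [← add_sub_cancel (∫ ω, b (X ω) ∂μ) (∫ ω, Y ω ∂μ), ← integral_sub hY1 hb1, ← hintV,
    ← integral_add hb1 hV1]
  rfl

lemma integral_aipw_sq (hR : Measurable R) (hRbin : ∀ ω, R ω = 0 ∨ R ω = 1) (hY : Measurable Y)
    (hY2 : MemLp Y 2 μ) (hCI : CondIndepFun m hm R Y μ) (hX : Measurable X)
    (hmX : m = MeasurableSpace.comap X inferInstance) (hπ : ∀ᵐ ω ∂μ, 0 < (μ[R|m]) ω)
    (hb : Measurable b) (hb2 : MemLp (fun ω => b (X ω)) 2 μ)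
    (hψ2 : MemLp (aipw b X R Y (μ[R|m])) 2 μ) :
    ∫ ω, aipw b X R Y (μ[R|m]) ω ^ 2 ∂μ = ∫ ω, Y ω ^ 2 ∂μ +
      ∫ ω, (((μ[R|m]) ω)⁻¹ - 1) * (μ[fun ω => (Y ω - b (X ω)) ^ 2|m]) ω ∂μ := by
  have hRR : ∀ ω, R ω * R ω = R ω := fun ω => by rcases hRbin ω with h | h <;> simp [h]
  have hT2 : MemLp (fun ω => Y ω - b (X ω)) 2 μ := hY2.sub hb2
  have hV2 : MemLp (fun ω => R ω / (μ[R|m]) ω * (Y ω - b (X ω))) 2 μ :=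
    (hψ2.sub hb2).ae_eq (.of_forall fun ω => by simp [aipw])
  have hbsq := hb2.integrable_sq
  have hTsq := hT2.integrable_sq
  have hbT : Integrable (fun ω => b (X ω) * (Y ω - b (X ω))) μ := hb2.integrable_mul hT2
  have hbV : Integrable (fun ω => R ω / (μ[R|m]) ω * (b (X ω) * (Y ω - b (X ω)))) μ :=
    (hb2.integrable_mul hV2).congr (.of_forall fun ω => by simp only [Pi.mul_apply]; ring)
  have hVsq : Integrable (fun ω => R ω / (μ[R|m]) ω * ((Y ω - b (X ω)) ^ 2 / (μ[R|m]) ω)) μ :=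
    hV2.integrable_sq.congr (.of_forall fun ω => by
      linear_combination ((Y ω - b (X ω)) / (μ[R|m]) ω) ^ 2 * hRR ω)
  have ipw := integrable_and_integral_div_condExp_mul hR hRbin hY hCI hX hmX hπ
  obtain ⟨-, hintbV⟩ := ipw (fun z => b z.1 * (z.2.1 - b z.1)) (by fun_prop) hbV
  obtain ⟨hTsqπ, hintVsq⟩ := ipw (fun z => (z.2.1 - b z.1) ^ 2 / z.2.2) (by fun_prop) hVsq
  dsimp only at hintbV hTsqπ hintVsq
  calc ∫ ω, aipw b X R Y (μ[R|m]) ω ^ 2 ∂μ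
      = ∫ ω, b (X ω) ^ 2 + 2 * (R ω / (μ[R|m]) ω * (b (X ω) * (Y ω - b (X ω)))) +
          R ω / (μ[R|m]) ω * ((Y ω - b (X ω)) ^ 2 / (μ[R|m]) ω) ∂μ :=
        integral_congr_ae (.of_forall fun ω => by
          unfold aipw
          linear_combination ((Y ω - b (X ω)) / (μ[R|m]) ω) ^ 2 * hRR ω)
    _ = ∫ ω, b (X ω) ^ 2 ∂μ + 2 * ∫ ω, b (X ω) * (Y ω - b (X ω)) ∂μ +
          ∫ ω, (Y ω - b (X ω)) ^ 2 / (μ[R|m]) ω ∂μ := by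
        rw [integral_add (hbsq.fun_add (hbV.const_mul 2)) hVsq,
          integral_add hbsq (hbV.const_mul 2), integral_const_mul, hintbV, hintVsq]
    _ = ∫ ω, b (X ω) ^ 2 + 2 * (b (X ω) * (Y ω - b (X ω))) + (Y ω - b (X ω)) ^ 2 ∂μ +
          (∫ ω, (Y ω - b (X ω)) ^ 2 / (μ[R|m]) ω ∂μ - ∫ ω, (Y ω - b (X ω)) ^ 2 ∂μ) := by
        rw [integral_add (hbsq.fun_add (hbT.const_mul 2)) hTsq,
          integral_add hbsq (hbT.const_mul 2), integral_const_mul]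
        ring
    _ = _ := by
        rw [integral_inv_sub_one_mul_condExp hm stronglyMeasurable_condExp hTsq hTsqπ]
        congr 2 with ω
        ring

lemma variance_aipw (hR : Measurable R) (hRbin : ∀ ω, R ω = 0 ∨ R ω = 1) (hY : Measurable Y)
    (hY2 : MemLp Y 2 μ) (hCI : CondIndepFun m hm R Y μ) (hX : Measurable X)
    (hmX : m = MeasurableSpace.comap X inferInstance) (hπ : ∀ᵐ ω ∂μ, 0 < (μ[R|m]) ω)
    (hb : Measurable b) (hb2 : MemLp (fun ω => b (X ω)) 2 μ)
    (hψ2 : MemLp (aipw b X R Y (μ[R|m])) 2 μ) :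
    variance (aipw b X R Y (μ[R|m])) μ = variance Y μ +
      ∫ ω, (((μ[R|m]) ω)⁻¹ - 1) * (μ[fun ω => (Y ω - b (X ω)) ^ 2|m]) ω ∂μ := by
  rw [variance_eq_sub hψ2, variance_eq_sub hY2]
  simp only [Pi.pow_apply]
  rw [integral_aipw hR hRbin hY (hY2.integrable one_le_two) hCI hX hmX hπ hb
      (hb2.integrable one_le_two) (hψ2.integrable one_le_two),
    integral_aipw_sq hR hRbin hY hY2 hCI hX hmX hπ hb hb2 hψ2]
  ring

end AIPW

theorem variance_order_of_IF_general {Ω : Type*} [mΩ : MeasurableSpace Ω]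
    [StandardBorelSpace Ω] (μ : Measure Ω) [IsProbabilityMeasure μ] {p : ℕ}
    (X : Ω → Fin p → ℝ) (hX : Measurable X) (R : Ω → ℝ) (hR : Measurable R)
    (hRbin : ∀ ω, R ω = 0 ∨ R ω = 1) (Y : Ω → ℝ) (hY : Measurable Y)
    (hY2 : MemLp Y 2 μ)
    (mX : MeasurableSpace Ω) (hmXdef : mX = MeasurableSpace.comap X inferInstance)
    (hmX : mX ≤ mΩ)
    (hCI : CondIndepFun mX hmX R Y μ)
    (hπ : ∀ᵐ ω ∂μ, (μ[R | mX]) ω ∈ Set.Ioo (0 : ℝ) 1)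
    (hπinv : Integrable (fun ω => ((μ[R | mX]) ω)⁻¹) μ)
    (μf : (Fin p → ℝ) → ℝ) (hμf : Measurable μf)
    (hμf2 : MemLp (fun ω => μf (X ω)) 2 μ)
    (σ₁ σ₂ : ℝ)
    (hlow : ∀ᵐ ω ∂μ,
      σ₁ ^ 2 ≤ (μ[(fun ω' => (Y ω' - (μ[Y | mX]) ω') ^ 2) | mX]) ω)
    (hup : ∀ᵐ ω ∂μ,
      (μ[(fun ω' => (Y ω' - μf (X ω')) ^ 2) | mX]) ω ≤ σ₂ ^ 2)
    (hVarY : variance Y μ ≤ σ₂ ^ 2)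
    (a θ₀ : ℝ) (ha : a = (∫ ω, ((μ[R | mX]) ω)⁻¹ ∂μ)⁻¹)
    (ψ : Ω → ℝ)
    (hψ : ψ = fun ω => μf (X ω) - θ₀ + (R ω / (μ[R | mX]) ω) * (Y ω - μf (X ω)))
    (hψ2 : MemLp ψ 2 μ) :
    σ₁ ^ 2 ≤ a * variance ψ μ ∧ a * variance ψ μ ≤ σ₂ ^ 2 := by
  have hψθ : ψ = fun ω => aipw μf X R Y (μ[R|mX]) ω - θ₀ := by
    rw [hψ]; funext ω; simp only [aipw]; ring
  have haipw2 : MemLp (aipw μf X R Y (μ[R|mX])) 2 μ :=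
    (hψ2.add (memLp_const θ₀)).ae_eq (.of_forall fun ω => by simp [hψθ])
  have hVar : variance ψ μ = variance Y μ +
      ∫ ω, (((μ[R|mX]) ω)⁻¹ - 1) * (μ[fun ω => (Y ω - μf (X ω)) ^ 2|mX]) ω ∂μ := by
    rw [hψθ, variance_sub_const haipw2.1]
    exact variance_aipw hR hRbin hY hY2 hCI hX hmXdef (hπ.mono fun ω h => h.1) hμf hμf2 haipw2
  have hXm : Measurable[mX] X := hmXdef ▸ comap_measurable X
  have hσY : ∀ᵐ ω ∂μ, σ₁ ^ 2 ≤ (μ[fun ω => (Y ω - μf (X ω)) ^ 2|mX]) ω := by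
    filter_upwards [hlow, condVar_ae_le_condExp_sub_sq hmX hY2
      (hμf.comp hXm).stronglyMeasurable hμf2] with ω h1 h2
    exact h1.trans h2
  have hw0 : 0 ≤ᵐ[μ] fun ω => ((μ[R|mX]) ω)⁻¹ - 1 :=
    hπ.mono fun ω h => sub_nonneg.2 ((one_le_inv₀ h.1).2 h.2.le)
  have hw : ∫ ω, (((μ[R|mX]) ω)⁻¹ - 1) ∂μ = ∫ ω, ((μ[R|mX]) ω)⁻¹ ∂μ - 1 := by
    rw [integral_sub hπinv (integrable_const 1), integral_const, probReal_univ, one_smul]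
  have hc : 0 < ∫ ω, ((μ[R|mX]) ω)⁻¹ ∂μ := by linarith [hw ▸ integral_nonneg_of_ae hw0]
  obtain ⟨hlo, hhi⟩ := mul_integral_le_integral_mul_and_integral_mul_le
    (hπinv.sub' (integrable_const 1)) hw0 integrable_condExp.1 hσY hup
  rw [hw] at hlo hhi
  have hσVarY := le_variance_of_ae_le_condVar hmX hY2 hlow
  rw [ha, hVar]
  constructor
  · rw [le_inv_mul_iff₀ hc]; linarith
  · rw [inv_mul_le_iff₀ hc]; linarith

/-- Order of the variance of the doubly robust influence function: under ignorability,
with `π(X) = E[R|σ(X)] ∈ (0,1)` a.s., conditional-variance bounds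
`σ₁² ≤ E[(Y−m(X))²|X]`, `E[(Y−μf(X))²|X] ≤ σ₂²`, `Var(Y) ≤ σ₂²`, and
`a⁻¹ = E[1/π(X)]`, the influence function
`ψ(Z) = μf(X) − θ₀ + (R/π(X))(Y − μf(X))` satisfies `σ₁² ≤ a·Var(ψ) ≤ σ₂²`. -/
theorem variance_order_of_IF {Ω : Type*} [mΩ : MeasurableSpace Ω]
    [StandardBorelSpace Ω] (μ : Measure Ω) [IsProbabilityMeasure μ] {p : ℕ}
    (X : Ω → Fin p → ℝ) (hX : Measurable X) (R : Ω → ℝ) (hR : Measurable R)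
    (hRbin : ∀ ω, R ω = 0 ∨ R ω = 1) (Y : Ω → ℝ) (hY : Measurable Y)
    (hY2 : MemLp Y 2 μ)
    (mX : MeasurableSpace Ω) (hmXdef : mX = MeasurableSpace.comap X inferInstance)
    (hmX : mX ≤ mΩ)
    (hCI : CondIndepFun mX hmX R Y μ)
    (hπ : ∀ᵐ ω ∂μ, (μ[R | mX]) ω ∈ Set.Ioo (0 : ℝ) 1)
    (hπinv : Integrable (fun ω => ((μ[R | mX]) ω)⁻¹) μ)
    (μf : (Fin p → ℝ) → ℝ) (hμf : Measurable μf)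
    (hμf2 : MemLp (fun ω => μf (X ω)) 2 μ)
    (σ₁ σ₂ : ℝ) (hσ₁ : 0 < σ₁)
    (hlow : ∀ᵐ ω ∂μ,
      σ₁ ^ 2 ≤ (μ[(fun ω' => (Y ω' - (μ[Y | mX]) ω') ^ 2) | mX]) ω)
    (hup : ∀ᵐ ω ∂μ,
      (μ[(fun ω' => (Y ω' - μf (X ω')) ^ 2) | mX]) ω ≤ σ₂ ^ 2)
    (hVarY : variance Y μ ≤ σ₂ ^ 2)
    (a θ₀ : ℝ) (ha : a = (∫ ω, ((μ[R | mX]) ω)⁻¹ ∂μ)⁻¹) (hθ₀ : θ₀ = ∫ ω, Y ω ∂μ)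
    (ψ : Ω → ℝ)
    (hψ : ψ = fun ω => μf (X ω) - θ₀ + (R ω / (μ[R | mX]) ω) * (Y ω - μf (X ω)))
    (hψ2 : MemLp ψ 2 μ) :
    σ₁ ^ 2 ≤ a * variance ψ μ ∧ a * variance ψ μ ≤ σ₂ ^ 2 :=
  variance_order_of_IF_general (mΩ := mΩ) μ X hX R hR hRbin Y hY hY2 mX hmXdef hmX hCI hπ hπinv μf
    hμf hμf2 σ₁ σ₂ hlow hup hVarY a θ₀ ha ψ hψ hψ2
end

section
/- Under MCAR (π(X) ≡ π constant), with influence functions ψ_μ(Z) = (R/π)(Y − μ(X)) + μ(X) − θ₀ and Ψ(Z) = ψ_μ(Z) + ((R−π)/π)·Δ_μ where Δ_μ = E[μ(X) − m(X)], one has Var(ψ_μ(Z)) = Var(Ψ(Z)) + (π^{−1} − 1)·Δ_μ², so Var(ψ_μ(Z)) ≥ Var(Ψ(Z)) with strict inequality whenever Δ_μ ≠ 0 and π < 1. -/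
/-!
Under MCAR, `Ψ = ψ + (Δ/π)(R - π)`, so `Var Ψ = Var ψ + 2(Δ/π) Cov(ψ, R) + (Δ/π)² Var R`.
Since `R² = R` and `R` is independent of `(Y, X)`, `Var R = π(1 - π)` and
`Cov(R, ψ) = (1 - π) E[Y - μf(X)] = -(1 - π) Δ`.
The two correction terms add up to `-(π⁻¹ - 1) Δ²`.
-/

open MeasureTheory ProbabilityTheory

namespace ProbabilityTheory

variable {Ω : Type*} {mΩ : MeasurableSpace Ω} {μ : Measure Ω} {R U V : Ω → ℝ}

lemma memLp_of_forall_eq_zero_or_one [IsFiniteMeasure μ] (hR : AEStronglyMeasurable R μ)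
    (hRbin : ∀ ω, R ω = 0 ∨ R ω = 1) (p : ENNReal) : MemLp R p μ :=
  .of_bound hR 1 <| .of_forall fun ω => by rcases hRbin ω with h | h <;> simp [h]

variable [IsProbabilityMeasure μ]

lemma variance_of_forall_eq_zero_or_one (hR : AEStronglyMeasurable R μ)
    (hRbin : ∀ ω, R ω = 0 ∨ R ω = 1) : Var[R; μ] = μ[R] * (1 - μ[R]) := by
  have hRR : R ^ 2 = R := funext fun ω => by rcases hRbin ω with h | h <;> simp [h]
  rw [variance_eq_sub (memLp_of_forall_eq_zero_or_one hR hRbin 2), hRR]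
  ring

lemma covariance_mul_of_indepFun_of_forall_eq_zero_or_one (hR : AEStronglyMeasurable R μ)
    (hRbin : ∀ ω, R ω = 0 ∨ R ω = 1) (hU : MemLp U 2 μ) (hRU : R ⟂ᵢ[μ] U) :
    cov[R, R * U; μ] = μ[R] * (1 - μ[R]) * μ[U] := by
  have hRLp := memLp_of_forall_eq_zero_or_one hR hRbin
  have hRRU : R * (R * U) = R * U :=
    funext fun ω => by rcases hRbin ω with h | h <;> simp [h]
  rw [covariance_eq_sub (hRLp 2) (hU.mul (hRLp ⊤)), hRRU,
    hRU.integral_mul_eq_mul_integral hR hU.1]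
  ring

lemma covariance_div_mul_add_of_indepFun (hR : AEStronglyMeasurable R μ)
    (hRbin : ∀ ω, R ω = 0 ∨ R ω = 1) {π : ℝ} (hπ : μ[R] = π) (hπ0 : π ≠ 0)
    (hU : MemLp U 2 μ) (hV : MemLp V 2 μ) (hRU : R ⟂ᵢ[μ] U) (hRV : R ⟂ᵢ[μ] V) :
    cov[R, fun ω => R ω / π * U ω + V ω; μ] = (1 - π) * μ[U] := by
  have hRLp := memLp_of_forall_eq_zero_or_one hR hRbin
  have hRU2 : MemLp (R * U) 2 μ := hU.mul (hRLp ⊤)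
  have hsplit : (fun ω => R ω / π * U ω + V ω) = π⁻¹ • (R * U) + V := by
    funext ω; simp only [Pi.add_apply, Pi.smul_apply, Pi.mul_apply, smul_eq_mul]; ring
  rw [hsplit, covariance_add_right (hRLp 2) (hRU2.const_smul _) hV,
    covariance_smul_right, covariance_mul_of_indepFun_of_forall_eq_zero_or_one hR hRbin hU hRU,
    hRV.covariance_eq_zero (hRLp 2) hV, hπ]
  field_simp
  ring

lemma variance_add_mul_sub_const {X Z : Ω → ℝ} (hX : MemLp X 2 μ) (hZ : MemLp Z 2 μ)
    (a c : ℝ) :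
    Var[fun ω => X ω + c * (Z ω - a); μ] =
      Var[X; μ] + 2 * c * cov[X, Z; μ] + c ^ 2 * Var[Z; μ] := by
  have hsplit : (fun ω => X ω + c * (Z ω - a)) = fun ω => (X + c • Z) ω - c * a := by
    funext ω; simp only [Pi.add_apply, Pi.smul_apply, smul_eq_mul]; ring
  rw [hsplit, variance_sub_const (hX.add (hZ.const_smul c)).1, variance_add hX (hZ.const_smul c),
    covariance_smul_right, variance_smul]
  ring

end ProbabilityTheory

theorem mcar_variance_decomposition_general {Ω : Type*} [mΩ : MeasurableSpace Ω]
    (μ : Measure Ω) [IsProbabilityMeasure μ] {p : ℕ}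
    (X : Ω → Fin p → ℝ) (R : Ω → ℝ) (hR : Measurable R)
    (hRbin : ∀ ω, R ω = 0 ∨ R ω = 1) (Y : Ω → ℝ)
    (hY2 : MemLp Y 2 μ)
    (hindep : IndepFun R (fun ω => (Y ω, X ω)) μ)
    (π : ℝ) (hπ : π ∈ Set.Ioo (0 : ℝ) 1) (hπdef : ∫ ω, R ω ∂μ = π)
    (μf : (Fin p → ℝ) → ℝ) (hμf : Measurable μf)
    (hμf2 : MemLp (fun ω => μf (X ω)) 2 μ)
    (mX : MeasurableSpace Ω)
    (hmX : mX ≤ mΩ)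
    (θ₀ Δ : ℝ)
    (hΔ : Δ = ∫ ω, (μf (X ω) - (μ[Y | mX]) ω) ∂μ)
    (ψ Ψ : Ω → ℝ)
    (hψ : ψ = fun ω => (R ω / π) * (Y ω - μf (X ω)) + μf (X ω) - θ₀)
    (hΨ : Ψ = fun ω => ψ ω + ((R ω - π) / π) * Δ) :
    variance ψ μ = variance Ψ μ + (π⁻¹ - 1) * Δ ^ 2 ∧
      variance Ψ μ ≤ variance ψ μ ∧
      (Δ ≠ 0 → variance Ψ μ < variance ψ μ) := by
  obtain ⟨hπ0, hπ1⟩ := hπ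
  have hRLp := memLp_of_forall_eq_zero_or_one (μ := μ) hR.aestronglyMeasurable hRbin
  have hU : MemLp (fun ω => Y ω - μf (X ω)) 2 μ := hY2.sub hμf2
  have hφ : MemLp (fun ω => R ω / π * (Y ω - μf (X ω)) + μf (X ω)) 2 μ := by
    simp_rw [div_eq_mul_inv]
    exact (hU.mul' ((hRLp ⊤).mul_const π⁻¹)).add hμf2
  have hψ2 : MemLp ψ 2 μ := hψ ▸ hφ.sub (memLp_const θ₀)
  have hΔU : Δ = -∫ ω, (Y ω - μf (X ω)) ∂μ := by
    rw [hΔ, integral_sub (hμf2.integrable one_le_two) integrable_condExp, integral_condExp hmX,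
      integral_sub (hY2.integrable one_le_two) (hμf2.integrable one_le_two)]
    ring
  have hcov : cov[ψ, R; μ] = -(1 - π) * Δ := by
    rw [covariance_comm, hψ, covariance_sub_const_right (hφ.integrable one_le_two),
      covariance_div_mul_add_of_indepFun hR.aestronglyMeasurable hRbin hπdef hπ0.ne' hU hμf2
        (hindep.comp measurable_id (measurable_fst.sub (hμf.comp measurable_snd)))
        (hindep.comp measurable_id (hμf.comp measurable_snd)), hΔU]
    ring
  have hvar : variance Ψ μ = variance ψ μ - (π⁻¹ - 1) * Δ ^ 2 := by
    have hΨ' : Ψ = fun ω => ψ ω + Δ / π * (R ω - π) := by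
      rw [hΨ]; funext ω; ring
    rw [hΨ', variance_add_mul_sub_const hψ2 (hRLp 2), hcov,
      variance_of_forall_eq_zero_or_one hR.aestronglyMeasurable hRbin, hπdef]
    field_simp
    ring
  have hπinv : 0 < π⁻¹ - 1 := sub_pos.2 ((one_lt_inv₀ hπ0).2 hπ1)
  refine ⟨by linarith, by nlinarith [sq_nonneg Δ], fun hΔ0 => ?_⟩
  nlinarith [mul_pos hπinv (pow_pos (abs_pos.2 hΔ0) 2), sq_abs Δ]

/-- Under MCAR (`R` independent of `(Y, X)` with `P(R=1) = π ∈ (0,1)`), with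
`ψ_μ(Z) = (R/π)(Y − μf(X)) + μf(X) − θ₀` and `Ψ(Z) = ψ_μ(Z) + ((R−π)/π)·Δ` where
`Δ = E[μf(X) − m(X)]`, one has `Var(ψ_μ) = Var(Ψ) + (π⁻¹ − 1)Δ²`; hence
`Var(Ψ) ≤ Var(ψ_μ)`, strictly whenever `Δ ≠ 0`. -/
theorem mcar_variance_decomposition {Ω : Type*} [mΩ : MeasurableSpace Ω]
    (μ : Measure Ω) [IsProbabilityMeasure μ] {p : ℕ}
    (X : Ω → Fin p → ℝ) (hX : Measurable X) (R : Ω → ℝ) (hR : Measurable R)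
    (hRbin : ∀ ω, R ω = 0 ∨ R ω = 1) (Y : Ω → ℝ) (hY : Measurable Y)
    (hY2 : MemLp Y 2 μ)
    (hindep : IndepFun R (fun ω => (Y ω, X ω)) μ)
    (π : ℝ) (hπ : π ∈ Set.Ioo (0 : ℝ) 1) (hπdef : ∫ ω, R ω ∂μ = π)
    (μf : (Fin p → ℝ) → ℝ) (hμf : Measurable μf)
    (hμf2 : MemLp (fun ω => μf (X ω)) 2 μ)
    (mX : MeasurableSpace Ω) (hmXdef : mX = MeasurableSpace.comap X inferInstance)
    (hmX : mX ≤ mΩ)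
    (θ₀ Δ : ℝ) (hθ₀ : θ₀ = ∫ ω, Y ω ∂μ)
    (hΔ : Δ = ∫ ω, (μf (X ω) - (μ[Y | mX]) ω) ∂μ)
    (ψ Ψ : Ω → ℝ)
    (hψ : ψ = fun ω => (R ω / π) * (Y ω - μf (X ω)) + μf (X ω) - θ₀)
    (hΨ : Ψ = fun ω => ψ ω + ((R ω - π) / π) * Δ) :
    variance ψ μ = variance Ψ μ + (π⁻¹ - 1) * Δ ^ 2 ∧
      variance Ψ μ ≤ variance ψ μ ∧
      (Δ ≠ 0 → variance Ψ μ < variance ψ μ) :=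
  mcar_variance_decomposition_general (mΩ := mΩ) μ X R hR hRbin Y hY2 hindep π hπ hπdef μf hμf hμf2
    mX hmX θ₀ Δ hΔ ψ Ψ hψ hΨ
end
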